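/- Let Q be a CSP instance and T a nice tree decomposition of its constraint graph. The integral points of the polytope P(Q) are exactly the vectors f^z, over all feasible assignments z of Q, where f^z(K) = 1 if K is the configuration of the bag B induced by z (i.e., K ∈ 𝒦(B) and K(u) = z_u for all u ∈ B) and f^z(K) = 0 otherwise; moreover the map z ↦ f^z is injective, so the integral points of P(Q) are in bijection with the feasible assignments of Q. -/

import Mathlib

/-! Common definitions: CSP instances, configurations, nice tree decompositions,
and the polytopes from Kolman–Koutecký. -/

/-- A constraint with scope `scope`; its satisfaction depends only on the
coordinates in the scope (it is a relation on the domains of the scope). -/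
structure CSPConstraint (n : ℕ) where
  scope : Finset (Fin n)
  sat : (Fin n → ℝ) → Prop
  sat_congr : ∀ z z' : Fin n → ℝ, (∀ v ∈ scope, z v = z' v) → sat z → sat z'

/-- A CSP instance: finite real domains, hard constraints and soft constraints. -/
structure CSPInstance (n : ℕ) where
  dom : Fin n → Finset ℝ
  hard : List (CSPConstraint n)
  soft : List (CSPConstraint n)

variable {n : ℕ}

/-- The list of all constraints (hard and soft). -/
def consList (Q : CSPInstance n) : List (CSPConstraint n) := Q.hard ++ Q.soft

/-- A feasible assignment: values in the domains, satisfying all hard constraints. -/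
def Feasible (Q : CSPInstance n) (z : Fin n → ℝ) : Prop :=
  (∀ v, z v ∈ Q.dom v) ∧ ∀ C ∈ Q.hard, C.sat z

-- Configurations of a set `W` of variables: partial assignments (with `none`
-- playing the role of the symbol `λ`) defined exactly on `W`.
open Classical in
noncomputable def configs (Q : CSPInstance n) (W : Finset (Fin n)) :
    Finset (Fin n → Option ℝ) :=
  (Fintype.piFinset fun v =>
      if v ∈ W then (Q.dom v).image some else ({none} : Finset (Option ℝ))).filter
    (fun K => ∀ C ∈ Q.hard, C.scope ⊆ W → C.sat (fun v => (K v).getD 0))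

/-- Restriction `K↾_W` of a configuration: coordinates outside `W` are set to `λ`. -/
def restrictCfg (K : Fin n → Option ℝ) (W : Finset (Fin n)) : Fin n → Option ℝ :=
  fun v => if v ∈ W then K v else none

/-- A (rooted) nice tree: leaves, introduce nodes, forget nodes and join nodes. -/
inductive NiceTree (n : ℕ) : Type
  | leaf (v : Fin n) : NiceTree n
  | introduce (v : Fin n) (t : NiceTree n) : NiceTree n
  | forget (v : Fin n) (t : NiceTree n) : NiceTree n
  | join (t₁ t₂ : NiceTree n) : NiceTree n

namespace NiceTree

/-- The bag of the root node of a nice tree. -/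
def bag : NiceTree n → Finset (Fin n)
  | leaf v => {v}
  | introduce v t => insert v (bag t)
  | forget v t => (bag t).erase v
  | join t₁ _ => bag t₁

/-- All vertices appearing in bags of the tree. -/
def verts : NiceTree n → Finset (Fin n)
  | leaf v => {v}
  | introduce v t => insert v (verts t)
  | forget _ t => verts t
  | join t₁ t₂ => verts t₁ ∪ verts t₂

/-- Number of nodes of the tree. -/
def size : NiceTree n → ℕ
  | leaf _ => 1
  | introduce _ t => size t + 1
  | forget _ t => size t + 1
  | join t₁ t₂ => size t₁ + size t₂ + 1

/-- Structural validity of a nice tree (in particular, the connectivity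
condition of tree decompositions: an introduced vertex does not occur below,
and vertices shared by the two subtrees of a join lie in its bag). -/
def valid : NiceTree n → Prop
  | leaf _ => True
  | introduce v t => v ∉ verts t ∧ valid t
  | forget v t => v ∈ bag t ∧ valid t
  | join t₁ t₂ => bag t₁ = bag t₂ ∧ verts t₁ ∩ verts t₂ ⊆ bag t₁ ∧ valid t₁ ∧ valid t₂

/-- `isSubtree s t`: `s` is a node (subtree) of `t`. -/
def isSubtree (s : NiceTree n) : NiceTree n → Prop
  | leaf v => s = leaf v
  | introduce v t => s = introduce v t ∨ isSubtree s t
  | forget v t => s = forget v t ∨ isSubtree s t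
  | join t₁ t₂ => s = join t₁ t₂ ∨ isSubtree s t₁ ∨ isSubtree s t₂

-- The configurations relevant to the subtree: `ℛ(a) = ⋃_{b ∈ T(a)} 𝒦(B(b))`.
open Classical in
noncomputable def relConfigs (Q : CSPInstance n) : NiceTree n → Finset (Fin n → Option ℝ)
  | leaf v => configs Q {v}
  | introduce v t => configs Q (insert v (bag t)) ∪ relConfigs Q t
  | forget v t => configs Q ((bag t).erase v) ∪ relConfigs Q t
  | join t₁ t₂ => relConfigs Q t₁ ∪ relConfigs Q t₂

end NiceTree

/-- A valid nice tree decomposition for the CSP instance `Q`: every variable is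
in some bag and every constraint scope is contained in some bag. -/
def IsNiceTreeDecompCSP (Q : CSPInstance n) (T : NiceTree n) : Prop :=
  T.valid ∧ (∀ v : Fin n, v ∈ T.verts) ∧
    ∀ C ∈ consList Q, ∃ s : NiceTree n, s.isSubtree T ∧ C.scope ⊆ s.bag

/-- A valid nice tree decomposition of a graph `G`: every vertex is in some bag
and both endpoints of every edge lie in a common bag. -/
def IsNiceTreeDecompGraph (G : SimpleGraph (Fin n)) (T : NiceTree n) : Prop :=
  T.valid ∧ (∀ v : Fin n, v ∈ T.verts) ∧
    ∀ u v : Fin n, G.Adj u v → ∃ s : NiceTree n, s.isSubtree T ∧ u ∈ s.bag ∧ v ∈ s.bag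

/-- The constraint graph of a CSP instance. -/
def constraintGraph (Q : CSPInstance n) : SimpleGraph (Fin n) where
  Adj u v := u ≠ v ∧ ∃ C ∈ consList Q, u ∈ C.scope ∧ v ∈ C.scope
  symm := by
    constructor
    rintro u v ⟨hne, C, hC, hu, hv⟩
    exact ⟨hne.symm, C, hC, hv, hu⟩
  loopless := by
    constructor
    rintro v ⟨hne, -⟩
    exact hne rfl

-- The LP constraints of `P(Q)` relevant to the subtree `t`: bag equations and
-- consistency equations at introduce and forget nodes of `t`.
def RelCons (Q : CSPInstance n) (f : (Fin n → Option ℝ) → ℝ) : NiceTree n → Prop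
  | .leaf v => ∑ K ∈ configs Q {v}, f K = 1
  | .introduce v t =>
      RelCons Q f t ∧ (∑ K ∈ configs Q (insert v t.bag), f K = 1) ∧
      ∀ K ∈ configs Q t.bag,
        ∑ K' ∈ (configs Q (insert v t.bag)).filter
            (fun K' => restrictCfg K' t.bag = K), f K' = f K
  | .forget v t =>
      RelCons Q f t ∧ (∑ K ∈ configs Q (t.bag.erase v), f K = 1) ∧
      ∀ K ∈ configs Q (t.bag.erase v),
        ∑ K' ∈ (configs Q t.bag).filter
            (fun K' => restrictCfg K' (t.bag.erase v) = K), f K' = f K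
  | .join t₁ t₂ => RelCons Q f t₁ ∧ RelCons Q f t₂

/-- All the constraints of `P(Q)` relevant to the subtree `t`, including the
bounds `0 ≤ f(K) ≤ 1` for relevant configurations. -/
def RelevantLP (Q : CSPInstance n) (t : NiceTree n) (f : (Fin n → Option ℝ) → ℝ) : Prop :=
  RelCons Q f t ∧ ∀ K ∈ t.relConfigs Q, 0 ≤ f K ∧ f K ≤ 1

/-- The polytope `P(Q) ⊆ ℝ^{𝒦_ℬ}` (coordinates outside `𝒦_ℬ` are zero). -/
def Ppoly (Q : CSPInstance n) (T : NiceTree n) : Set ((Fin n → Option ℝ) → ℝ) :=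
  {f | RelevantLP Q T f ∧ ∀ K, K ∉ T.relConfigs Q → f K = 0}

/-- Extended feasible assignments `(z, h)`. -/
def ExtAssignments (Q : CSPInstance n) :
    Set ((Fin n → ℝ) × (Fin Q.soft.length → ℝ)) :=
  {p | Feasible Q p.1 ∧ ∀ i : Fin Q.soft.length,
      ((Q.soft.get i).sat p.1 ∧ p.2 i = 1) ∨ (¬ (Q.soft.get i).sat p.1 ∧ p.2 i = 0)}

/-- `CSP(Q)`: the convex hull of all extended feasible assignments. -/
def CSPpolytope (Q : CSPInstance n) : Set ((Fin n → ℝ) × (Fin Q.soft.length → ℝ)) :=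
  convexHull ℝ (ExtAssignments Q)

/-- `CSP'(Q)`: the convex hull of all feasible assignments. -/
def CSPpolytope' (Q : CSPInstance n) : Set (Fin n → ℝ) :=
  convexHull ℝ {z | Feasible Q z}

/-- The `y`-variables of the basic LP: one for each `v ∈ V` and `i ∈ D_v`. -/
abbrev YType (Q : CSPInstance n) := (v : Fin n) → {i : ℝ // i ∈ Q.dom v} → ℝ

/-- The `g`-variables of the basic LP: one for each constraint `C_U ∈ 𝒞 ∪ ℋ`
and each configuration `K ∈ 𝒦(U)`. -/
abbrev GType (Q : CSPInstance n) :=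
  (c : Fin (consList Q).length) →
    {K : Fin n → Option ℝ // K ∈ configs Q ((consList Q).get c).scope} → ℝ

/-- The basic LP (1)–(3). -/
def BasicLP (Q : CSPInstance n) (p : YType Q × GType Q) : Prop :=
  (∀ v : Fin n, ∑ i ∈ (Q.dom v).attach, p.1 v i = 1) ∧
  (∀ c : Fin (consList Q).length, ∀ v ∈ ((consList Q).get c).scope,
    ∀ (i : ℝ) (hi : i ∈ Q.dom v),
      ∑ K ∈ (configs Q ((consList Q).get c).scope).attach.filter
          (fun K => K.1 v = some i), p.2 c K = p.1 v ⟨i, hi⟩) ∧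
  (∀ v i, 0 ≤ p.1 v i ∧ p.1 v i ≤ 1) ∧ (∀ c K, 0 ≤ p.2 c K ∧ p.2 c K ≤ 1)

/-- Integrality (all coordinates in `{0,1}`) of a `(y, g)` vector. -/
def IntegralYG (Q : CSPInstance n) (p : YType Q × GType Q) : Prop :=
  (∀ v i, p.1 v i = 0 ∨ p.1 v i = 1) ∧ ∀ c K, p.2 c K = 0 ∨ p.2 c K = 1

-- The map sending a (feasible) assignment `z` to the `(y, g)` vector of the basic LP.
open Classical in
noncomputable def exMap (Q : CSPInstance n) (z : Fin n → ℝ) : YType Q × GType Q :=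
  (fun v i => if z v = i.1 then 1 else 0,
   fun c K => if ∀ u ∈ ((consList Q).get c).scope, K.1 u = some (z u) then 1 else 0)

-- The 0/1 vector `f^z` induced by an assignment `z`: it equals `1` exactly on
-- those relevant configurations that agree with `z` on their bag.
open Classical in
noncomputable def inducedVec (Q : CSPInstance n) (T : NiceTree n) (z : Fin n → ℝ) :
    (Fin n → Option ℝ) → ℝ :=
  fun K => if K ∈ T.relConfigs Q ∧ ∀ u, K u = none ∨ K u = some (z u) then 1 else 0

/-!
In an integral point `f` of `P(Q)` the values on the configurations of a bag are `0` or `1` and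
sum to `1`, so `f` selects exactly one configuration per bag. The equations at introduce and
forget nodes force the configuration selected at a child to be the restriction of the one
selected at its parent, and the two children of a join select the same configuration of their
common bag. Going up the tree, the selected configurations therefore glue to a single assignment
`z` with `f = f^z`: an introduced vertex is new, and the vertices shared by the two sides of a
join lie in its bag. Since every variable and every constraint scope lies in some bag, `z` is
feasible. Conversely `f^z` satisfies every equation because restricting the configuration of a
bag induced by `z` gives the configuration induced by `z`, and `f^z` determines `z` since it
records `z` on every bag.
-/

section ZeroOne

variable {α : Type*} {s : Finset α} {f : α → ℝ}

lemma exists_eq_one_of_sum_eq_one (h01 : ∀ a, f a = 0 ∨ f a = 1) (hs : ∑ a ∈ s, f a = 1) :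
    ∃ a ∈ s, f a = 1 := by
  obtain ⟨a, ha, hne⟩ := Finset.exists_ne_zero_of_sum_ne_zero (hs ▸ one_ne_zero)
  exact ⟨a, ha, (h01 a).resolve_left hne⟩

lemma eq_of_sum_eq_one (h01 : ∀ a, f a = 0 ∨ f a = 1) (hs : ∑ a ∈ s, f a = 1) {a b : α}
    (ha : a ∈ s) (hb : b ∈ s) (hfa : f a = 1) (hfb : f b = 1) : a = b := by
  by_contra hab
  have hnonneg : ∀ c ∈ s, 0 ≤ f c := fun c _ => by rcases h01 c with h | h <;> simp [h]
  linarith [Finset.add_le_sum hnonneg ha hb hab]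

end ZeroOne

def Agrees (z : Fin n → ℝ) (K : Fin n → Option ℝ) : Prop :=
  ∀ u, K u = none ∨ K u = some (z u)

def assignCfg (z : Fin n → ℝ) (W : Finset (Fin n)) : Fin n → Option ℝ :=
  fun v => if v ∈ W then some (z v) else none

section Configurations

variable {Q : CSPInstance n} {W W' : Finset (Fin n)} {K : Fin n → Option ℝ} {z z' : Fin n → ℝ}

lemma mem_configs_iff : K ∈ configs Q W ↔
    (∀ v, K v ∈ if v ∈ W then (Q.dom v).image some else ({none} : Finset (Option ℝ))) ∧
      ∀ C ∈ Q.hard, C.scope ⊆ W → C.sat (fun v => (K v).getD 0) := by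
  classical
  rw [configs, Finset.mem_filter, Fintype.mem_piFinset]

lemma apply_eq_none_of_mem_configs (hK : K ∈ configs Q W) {v : Fin n} (hv : v ∉ W) :
    K v = none := by
  simpa [hv] using (mem_configs_iff.1 hK).1 v

lemma apply_ne_none_of_mem_configs (hK : K ∈ configs Q W) {v : Fin n} (hv : v ∈ W) :
    K v ≠ none := by
  obtain ⟨a, -, ha⟩ : ∃ a ∈ Q.dom v, some a = K v := by
    simpa [hv] using (mem_configs_iff.1 hK).1 v
  simp [← ha]

lemma assignCfg_mem_configs_iff : assignCfg z W ∈ configs Q W ↔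
    (∀ v ∈ W, z v ∈ Q.dom v) ∧ ∀ C ∈ Q.hard, C.scope ⊆ W → C.sat z := by
  have hsat : ∀ C : CSPConstraint n, C.scope ⊆ W →
      (C.sat (fun v => (assignCfg z W v).getD 0) ↔ C.sat z) := fun C hC =>
    ⟨C.sat_congr _ _ fun v hv => by simp [assignCfg, hC hv],
      C.sat_congr _ _ fun v hv => by simp [assignCfg, hC hv]⟩
  rw [mem_configs_iff]
  refine and_congr ⟨fun h v hv => by simpa [assignCfg, hv] using h v, fun h v => ?_⟩
    (forall₂_congr fun C _ => forall_congr' fun hC => hsat C hC)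
  by_cases hv : v ∈ W <;> simp [assignCfg, hv, h]

lemma assignCfg_mem_configs (hz : Feasible Q z) (W : Finset (Fin n)) :
    assignCfg z W ∈ configs Q W :=
  assignCfg_mem_configs_iff.2 ⟨fun v _ => hz.1 v, fun C hC _ => hz.2 C hC⟩

lemma restrictCfg_assignCfg (h : W' ⊆ W) (z : Fin n → ℝ) :
    restrictCfg (assignCfg z W) W' = assignCfg z W' := by
  funext v
  by_cases hv : v ∈ W'
  · simp [restrictCfg, assignCfg, hv, h hv]
  · simp [restrictCfg, assignCfg, hv]

lemma agrees_assignCfg (z : Fin n → ℝ) (W : Finset (Fin n)) : Agrees z (assignCfg z W) := by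
  intro u
  by_cases hu : u ∈ W <;> simp [assignCfg, hu]

lemma agrees_getD (K : Fin n → Option ℝ) (c : ℝ) : Agrees (fun u => (K u).getD c) K := by
  intro u
  cases hu : K u <;> simp [hu]

lemma Agrees.restrictCfg (h : Agrees z K) (W : Finset (Fin n)) : Agrees z (restrictCfg K W) := by
  intro u
  by_cases hu : u ∈ W <;> simp [_root_.restrictCfg, hu, h u]

lemma Agrees.eq_assignCfg (h : Agrees z K) (hK : K ∈ configs Q W) : K = assignCfg z W := by
  funext v
  by_cases hv : v ∈ W
  · simpa [assignCfg, hv] using (h v).resolve_left (apply_ne_none_of_mem_configs hK hv)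
  · simp [assignCfg, hv, apply_eq_none_of_mem_configs hK hv]

lemma agrees_congr (h : ∀ u, K u ≠ none → z u = z' u) : Agrees z K ↔ Agrees z' K :=
  forall_congr' fun u => by
    by_cases hu : K u = none
    · simp [hu]
    · rw [h u hu]

end Configurations

namespace NiceTree

variable {Q : CSPInstance n}

lemma bag_subset_verts : ∀ t : NiceTree n, t.bag ⊆ t.verts
  | leaf _ => subset_rfl
  | introduce v t => Finset.insert_subset_insert v t.bag_subset_verts
  | forget _ t => (Finset.erase_subset _ _).trans t.bag_subset_verts
  | join t₁ _ => t₁.bag_subset_verts.trans Finset.subset_union_left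

lemma configs_bag_subset_relConfigs : ∀ t : NiceTree n, configs Q t.bag ⊆ t.relConfigs Q
  | leaf _ => subset_rfl
  | introduce _ _ => Finset.subset_union_left
  | forget _ _ => Finset.subset_union_left
  | join t₁ _ => t₁.configs_bag_subset_relConfigs.trans Finset.subset_union_left

lemma mem_verts_of_mem_relConfigs {K : Fin n → Option ℝ} {u : Fin n} (hu : K u ≠ none)
    (t : NiceTree n) (hK : K ∈ t.relConfigs Q) : u ∈ t.verts := by
  have mem_bag {W : Finset (Fin n)} (hK : K ∈ configs Q W) : u ∈ W :=
    by_contra fun h => hu (apply_eq_none_of_mem_configs hK h)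
  induction t with
  | leaf _ => exact mem_bag hK
  | introduce v t ih =>
    rcases Finset.mem_union.1 hK with hK | hK
    · exact Finset.insert_subset_insert v t.bag_subset_verts (mem_bag hK)
    · exact Finset.mem_insert_of_mem (ih hK)
  | forget v t ih =>
    rcases Finset.mem_union.1 hK with hK | hK
    · exact t.bag_subset_verts (Finset.erase_subset v _ (mem_bag hK))
    · exact ih hK
  | join _ _ ih₁ ih₂ =>
    exact Finset.mem_union.2 ((Finset.mem_union.1 hK).imp ih₁ ih₂)

lemma relConfigs_mono {s t : NiceTree n} (h : s.isSubtree t) :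
    s.relConfigs Q ⊆ t.relConfigs Q := by
  induction t with
  | leaf _ => rw [show s = _ from h]
  | introduce _ _ ih | forget _ _ ih =>
    rcases h with rfl | h
    · exact subset_rfl
    · exact (ih h).trans Finset.subset_union_right
  | join _ _ ih₁ ih₂ =>
    rcases h with rfl | h | h
    · exact subset_rfl
    · exact (ih₁ h).trans Finset.subset_union_left
    · exact (ih₂ h).trans Finset.subset_union_right

lemma exists_isSubtree_mem_bag {v : Fin n} {t : NiceTree n} (hv : v ∈ t.verts) :
    ∃ s : NiceTree n, s.isSubtree t ∧ v ∈ s.bag := by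
  induction t with
  | leaf w => exact ⟨leaf w, rfl, hv⟩
  | introduce w t ih =>
    rcases Finset.mem_insert.1 hv with rfl | hv
    · exact ⟨introduce v t, .inl rfl, Finset.mem_insert_self v _⟩
    · obtain ⟨s, hs, hvs⟩ := ih hv
      exact ⟨s, .inr hs, hvs⟩
  | forget _ _ ih =>
    obtain ⟨s, hs, hvs⟩ := ih hv
    exact ⟨s, .inr hs, hvs⟩
  | join _ _ ih₁ ih₂ =>
    rcases Finset.mem_union.1 hv with hv | hv
    · obtain ⟨s, hs, hvs⟩ := ih₁ hv
      exact ⟨s, .inr (.inl hs), hvs⟩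
    · obtain ⟨s, hs, hvs⟩ := ih₂ hv
      exact ⟨s, .inr (.inr hs), hvs⟩

end NiceTree

namespace RelCons

variable {Q : CSPInstance n} {f : (Fin n → Option ℝ) → ℝ}

lemma of_isSubtree {s t : NiceTree n} (h : s.isSubtree t) (hf : RelCons Q f t) :
    RelCons Q f s := by
  induction t with
  | leaf _ => rwa [show s = _ from h]
  | introduce _ _ ih | forget _ _ ih =>
    rcases h with rfl | h
    · exact hf
    · exact ih h hf.1
  | join _ _ ih₁ ih₂ =>
    rcases h with rfl | h | h
    · exact hf
    · exact ih₁ h hf.1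
    · exact ih₂ h hf.2

lemma sum_bag_eq_one {t : NiceTree n} (hf : RelCons Q f t) : ∑ K ∈ configs Q t.bag, f K = 1 := by
  induction t with
  | leaf _ => exact hf
  | introduce _ _ | forget _ _ => exact hf.2.1
  | join _ _ ih₁ => exact ih₁ hf.1

end RelCons

section IntegralPoints

open NiceTree Function

variable {Q : CSPInstance n} {f : (Fin n → Option ℝ) → ℝ} {W : Finset (Fin n)}
  {z : Fin n → ℝ}

lemma eq_one_iff_agrees_of_sum_eq_one (h01 : ∀ K, f K = 0 ∨ f K = 1)
    (hsum : ∑ K ∈ configs Q W, f K = 1) {K₀ : Fin n → Option ℝ} (hK₀ : K₀ ∈ configs Q W)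
    (hf : f K₀ = 1) (hz : Agrees z K₀) : ∀ K ∈ configs Q W, f K = 1 ↔ Agrees z K :=
  fun K hK =>
    ⟨fun h => eq_of_sum_eq_one h01 hsum hK hK₀ h hf ▸ hz,
      fun h => by rwa [h.eq_assignCfg hK, ← hz.eq_assignCfg hK₀]⟩

lemma restrictCfg_eq_of_sum_filter_eq (h01 : ∀ K, f K = 0 ∨ f K = 1)
    {S : Finset (Fin n → Option ℝ)} (hsum : ∑ K ∈ S, f K = 1) {K K' : Fin n → Option ℝ}
    (hK' : K' ∈ S) (hf' : f K' = 1)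
    (hcons : ∑ K'' ∈ S.filter (fun K'' => restrictCfg K'' W = K), f K'' = f K)
    (hf : f K = 1) : restrictCfg K' W = K := by
  obtain ⟨K'', hK'', hf''⟩ := exists_eq_one_of_sum_eq_one h01 (hcons.trans hf)
  obtain ⟨hK''S, rfl⟩ := Finset.mem_filter.1 hK''
  rw [eq_of_sum_eq_one h01 hsum hK' hK''S hf' hf'']

lemma RelCons.exists_agrees_bag (h01 : ∀ K, f K = 0 ∨ f K = 1) {t : NiceTree n}
    (hrc : RelCons Q f t) (hz : ∀ K ∈ t.relConfigs Q, f K = 1 ↔ Agrees z K) :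
    ∃ K ∈ configs Q t.bag, f K = 1 ∧ Agrees z K := by
  obtain ⟨K, hK, hf⟩ := exists_eq_one_of_sum_eq_one h01 hrc.sum_bag_eq_one
  exact ⟨K, hK, hf, (hz K (t.configs_bag_subset_relConfigs hK)).1 hf⟩

lemma RelCons.exists_agrees_introduce (h01 : ∀ K, f K = 0 ∨ f K = 1) {v : Fin n}
    {t : NiceTree n} (hv : v ∉ t.verts) (hrc : RelCons Q f (.introduce v t))
    (hz : ∀ K ∈ t.relConfigs Q, f K = 1 ↔ Agrees z K) :
    ∃ z' : Fin n → ℝ, ∀ K ∈ (introduce v t).relConfigs Q, f K = 1 ↔ Agrees z' K := by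
  obtain ⟨hrc, hsum, hcons⟩ := hrc
  obtain ⟨K₀, hK₀, hf₀, hz₀⟩ := hrc.exists_agrees_bag h01 hz
  obtain ⟨K', hK', hf'⟩ := exists_eq_one_of_sum_eq_one h01 hsum
  have hres : restrictCfg K' t.bag = K₀ :=
    restrictCfg_eq_of_sum_filter_eq h01 hsum hK' hf' (hcons K₀ hK₀) hf₀
  obtain ⟨a, ha⟩ := Option.ne_none_iff_exists'.1
    (apply_ne_none_of_mem_configs hK' (Finset.mem_insert_self v t.bag))
  have hz' : Agrees (update z v a) K' := by
    intro u
    by_cases huv : u = v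
    · subst huv
      simp [ha]
    by_cases hu : u ∈ t.bag
    · have hK'u : K' u = K₀ u := by rw [← hres, restrictCfg, if_pos hu]
      rw [update_of_ne huv, hK'u]
      exact hz₀ u
    · exact .inl (apply_eq_none_of_mem_configs hK' (by simp [huv, hu]))
  refine ⟨update z v a, fun K hK => ?_⟩
  rcases Finset.mem_union.1 hK with hK | hK
  · exact eq_one_iff_agrees_of_sum_eq_one h01 hsum hK' hf' hz' K hK
  · rw [hz K hK]
    refine agrees_congr fun u hu => (update_of_ne ?_ a z).symm
    exact ne_of_mem_of_not_mem (mem_verts_of_mem_relConfigs hu t hK) hv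

lemma RelCons.agrees_forget (h01 : ∀ K, f K = 0 ∨ f K = 1) {v : Fin n} {t : NiceTree n}
    (hrc : RelCons Q f (.forget v t)) (hz : ∀ K ∈ t.relConfigs Q, f K = 1 ↔ Agrees z K) :
    ∀ K ∈ (forget v t).relConfigs Q, f K = 1 ↔ Agrees z K := by
  obtain ⟨hrc, hsum, hcons⟩ := hrc
  obtain ⟨K₀, hK₀, hf₀, hz₀⟩ := hrc.exists_agrees_bag h01 hz
  obtain ⟨K', hK', hf'⟩ := exists_eq_one_of_sum_eq_one h01 hsum
  have hres : restrictCfg K₀ (t.bag.erase v) = K' :=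
    restrictCfg_eq_of_sum_filter_eq h01 hrc.sum_bag_eq_one hK₀ hf₀ (hcons K' hK') hf'
  intro K hK
  rcases Finset.mem_union.1 hK with hK | hK
  · exact eq_one_iff_agrees_of_sum_eq_one h01 hsum hK' hf' (hres ▸ hz₀.restrictCfg _) K hK
  · exact hz K hK

lemma RelCons.exists_agrees_join (h01 : ∀ K, f K = 0 ∨ f K = 1) {t₁ t₂ : NiceTree n}
    (hbag : t₁.bag = t₂.bag) (hshared : t₁.verts ∩ t₂.verts ⊆ t₁.bag)
    (hrc : RelCons Q f (.join t₁ t₂)) {z₁ z₂ : Fin n → ℝ}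
    (hz₁ : ∀ K ∈ t₁.relConfigs Q, f K = 1 ↔ Agrees z₁ K)
    (hz₂ : ∀ K ∈ t₂.relConfigs Q, f K = 1 ↔ Agrees z₂ K) :
    ∃ z : Fin n → ℝ, ∀ K ∈ (join t₁ t₂).relConfigs Q, f K = 1 ↔ Agrees z K := by
  classical
  obtain ⟨K₁, hK₁, hf₁, hzK₁⟩ := hrc.1.exists_agrees_bag h01 hz₁
  obtain ⟨K₂, hK₂, hf₂, hzK₂⟩ := hrc.2.exists_agrees_bag h01 hz₂
  have hK₂₁ : K₂ = K₁ :=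
    eq_of_sum_eq_one h01 hrc.1.sum_bag_eq_one (hbag ▸ hK₂) hK₁ hf₂ hf₁
  -- both `z₁` and `z₂` agree with the configuration selected in the common bag
  have hz₁₂ : ∀ u ∈ t₁.bag, z₁ u = z₂ u := by
    have h := (hzK₁.eq_assignCfg hK₁).symm.trans (hK₂₁ ▸ hzK₂.eq_assignCfg (hbag ▸ hK₂))
    intro u hu
    simpa [assignCfg, hu] using congrFun h u
  refine ⟨fun u => if u ∈ t₁.verts then z₁ u else z₂ u, fun K hK => ?_⟩
  rcases Finset.mem_union.1 hK with hK | hK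
  · rw [hz₁ K hK]
    exact agrees_congr fun u hu => by simp [mem_verts_of_mem_relConfigs hu t₁ hK]
  · rw [hz₂ K hK]
    refine agrees_congr fun u hu => ?_
    have hu₂ := mem_verts_of_mem_relConfigs hu t₂ hK
    split_ifs with hu₁
    · exact (hz₁₂ u (hshared (Finset.mem_inter.2 ⟨hu₁, hu₂⟩))).symm
    · rfl

theorem RelCons.exists_agrees (h01 : ∀ K, f K = 0 ∨ f K = 1) {t : NiceTree n} (ht : t.valid)
    (hrc : RelCons Q f t) : ∃ z : Fin n → ℝ, ∀ K ∈ t.relConfigs Q, f K = 1 ↔ Agrees z K := by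
  induction t with
  | leaf v =>
    obtain ⟨K₀, hK₀, hf₀⟩ := exists_eq_one_of_sum_eq_one h01 hrc
    exact ⟨_, eq_one_iff_agrees_of_sum_eq_one h01 hrc hK₀ hf₀ (agrees_getD K₀ 0)⟩
  | introduce v t ih =>
    obtain ⟨z, hz⟩ := ih ht.2 hrc.1
    exact hrc.exists_agrees_introduce h01 ht.1 hz
  | forget v t ih =>
    obtain ⟨z, hz⟩ := ih ht.2 hrc.1
    exact ⟨z, hrc.agrees_forget h01 hz⟩
  | join t₁ t₂ ih₁ ih₂ =>
    obtain ⟨hbag, hshared, ht₁, ht₂⟩ := ht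
    obtain ⟨z₁, hz₁⟩ := ih₁ ht₁ hrc.1
    obtain ⟨z₂, hz₂⟩ := ih₂ ht₂ hrc.2
    exact hrc.exists_agrees_join h01 hbag hshared hz₁ hz₂

end IntegralPoints

section InducedVec

open NiceTree

variable {Q : CSPInstance n} {T : NiceTree n} {z : Fin n → ℝ} {K : Fin n → Option ℝ}
  {W W' : Finset (Fin n)}

lemma inducedVec_eq_one_iff : inducedVec Q T z K = 1 ↔ K ∈ T.relConfigs Q ∧ Agrees z K := by
  unfold inducedVec Agrees
  split_ifs with h <;> simp [h]

lemma inducedVec_eq_zero_or_one (K : Fin n → Option ℝ) :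
    inducedVec Q T z K = 0 ∨ inducedVec Q T z K = 1 := by
  unfold inducedVec
  split_ifs <;> simp

lemma inducedVec_eq_zero_of_notMem (hK : K ∉ T.relConfigs Q) : inducedVec Q T z K = 0 :=
  if_neg fun h => hK h.1

lemma inducedVec_of_mem_configs (hW : configs Q W ⊆ T.relConfigs Q) (hK : K ∈ configs Q W) :
    inducedVec Q T z K = if K = assignCfg z W then 1 else 0 := by
  split_ifs with h
  · exact inducedVec_eq_one_iff.2 ⟨hW hK, h ▸ agrees_assignCfg z W⟩
  · exact (inducedVec_eq_zero_or_one K).resolve_right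
      fun h1 => h ((inducedVec_eq_one_iff.1 h1).2.eq_assignCfg hK)

lemma sum_configs_inducedVec (hz : Feasible Q z) (hW : configs Q W ⊆ T.relConfigs Q) :
    ∑ K ∈ configs Q W, inducedVec Q T z K = 1 := by
  classical
  rw [Finset.sum_congr rfl fun K hK => inducedVec_of_mem_configs hW hK, Finset.sum_ite_eq',
    if_pos (assignCfg_mem_configs hz W)]

lemma sum_filter_restrictCfg_inducedVec (hz : Feasible Q z) (hW : configs Q W ⊆ T.relConfigs Q)
    (hW' : configs Q W' ⊆ T.relConfigs Q) (hsub : W' ⊆ W) (hK : K ∈ configs Q W') :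
    ∑ K' ∈ (configs Q W).filter (fun K' => restrictCfg K' W' = K), inducedVec Q T z K' =
      inducedVec Q T z K := by
  classical
  rw [Finset.sum_congr rfl fun K' hK' => inducedVec_of_mem_configs hW (Finset.mem_filter.1 hK').1,
    Finset.sum_ite_eq', inducedVec_of_mem_configs hW' hK]
  simp [restrictCfg_assignCfg hsub, assignCfg_mem_configs hz W, eq_comm]

lemma relCons_inducedVec (hz : Feasible Q z) {t : NiceTree n}
    (ht : t.relConfigs Q ⊆ T.relConfigs Q) : RelCons Q (inducedVec Q T z) t := by
  induction t with
  | leaf _ => exact sum_configs_inducedVec hz ht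
  | introduce v t ih =>
    have hnew := Finset.subset_union_left.trans ht
    have hold := Finset.subset_union_right.trans ht
    exact ⟨ih hold, sum_configs_inducedVec hz hnew, fun K hK =>
      sum_filter_restrictCfg_inducedVec hz hnew ((configs_bag_subset_relConfigs t).trans hold)
        (Finset.subset_insert v _) hK⟩
  | forget v t ih =>
    have hnew := Finset.subset_union_left.trans ht
    have hold := Finset.subset_union_right.trans ht
    exact ⟨ih hold, sum_configs_inducedVec hz hnew, fun K hK =>
      sum_filter_restrictCfg_inducedVec hz ((configs_bag_subset_relConfigs t).trans hold) hnew
        (Finset.erase_subset v _) hK⟩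
  | join t₁ t₂ ih₁ ih₂ =>
    exact ⟨ih₁ (Finset.subset_union_left.trans ht), ih₂ (Finset.subset_union_right.trans ht)⟩

lemma inducedVec_mem_ppoly (hz : Feasible Q z) : inducedVec Q T z ∈ Ppoly Q T := by
  refine ⟨⟨relCons_inducedVec hz subset_rfl, fun K _ => ?_⟩,
    fun K hK => inducedVec_eq_zero_of_notMem hK⟩
  rcases inducedVec_eq_zero_or_one (Q := Q) (T := T) (z := z) K with h | h <;> simp [h]

lemma inducedVec_injOn (hverts : ∀ v, v ∈ T.verts) :
    Set.InjOn (inducedVec Q T) {z | Feasible Q z} := by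
  intro z hz z' _ heq
  funext v
  obtain ⟨s, hs, hvs⟩ := exists_isSubtree_mem_bag (hverts v)
  have hmem : assignCfg z s.bag ∈ T.relConfigs Q :=
    relConfigs_mono hs (configs_bag_subset_relConfigs s (assignCfg_mem_configs hz s.bag))
  have h1 := inducedVec_eq_one_iff.2 ⟨hmem, agrees_assignCfg z s.bag⟩
  rw [heq, inducedVec_eq_one_iff] at h1
  simpa [assignCfg, hvs] using h1.2 v

end InducedVec

section Integral

open NiceTree

variable {Q : CSPInstance n} {T : NiceTree n} {f : (Fin n → Option ℝ) → ℝ} {z : Fin n → ℝ}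

lemma assignCfg_mem_configs_bag (h01 : ∀ K, f K = 0 ∨ f K = 1) (hrc : RelCons Q f T)
    (hz : ∀ K ∈ T.relConfigs Q, f K = 1 ↔ Agrees z K) {s : NiceTree n} (hs : s.isSubtree T) :
    assignCfg z s.bag ∈ configs Q s.bag := by
  obtain ⟨K, hK, hf⟩ := exists_eq_one_of_sum_eq_one h01 (hrc.of_isSubtree hs).sum_bag_eq_one
  have hzK := (hz K (relConfigs_mono hs (configs_bag_subset_relConfigs s hK))).1 hf
  rwa [← hzK.eq_assignCfg hK]

lemma feasible_of_relCons (hverts : ∀ v, v ∈ T.verts)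
    (hscopes : ∀ C ∈ Q.hard, ∃ s : NiceTree n, s.isSubtree T ∧ C.scope ⊆ s.bag)
    (h01 : ∀ K, f K = 0 ∨ f K = 1) (hrc : RelCons Q f T)
    (hz : ∀ K ∈ T.relConfigs Q, f K = 1 ↔ Agrees z K) : Feasible Q z := by
  refine ⟨fun v => ?_, fun C hC => ?_⟩
  · obtain ⟨s, hs, hvs⟩ := exists_isSubtree_mem_bag (hverts v)
    exact (assignCfg_mem_configs_iff.1 (assignCfg_mem_configs_bag h01 hrc hz hs)).1 v hvs
  · obtain ⟨s, hs, hCs⟩ := hscopes C hC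
    exact (assignCfg_mem_configs_iff.1 (assignCfg_mem_configs_bag h01 hrc hz hs)).2 C hC hCs

lemma eq_inducedVec (h01 : ∀ K, f K = 0 ∨ f K = 1) (hzero : ∀ K, K ∉ T.relConfigs Q → f K = 0)
    (hz : ∀ K ∈ T.relConfigs Q, f K = 1 ↔ Agrees z K) : f = inducedVec Q T z := by
  have hone : ∀ K, f K = 1 ↔ inducedVec Q T z K = 1 := fun K => by
    by_cases hK : K ∈ T.relConfigs Q
    · rw [hz K hK, inducedVec_eq_one_iff, and_iff_right hK]
    · simp [hzero K hK, inducedVec_eq_zero_of_notMem hK]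
  funext K
  have hK := hone K
  rcases h01 K with h | h <;> rcases inducedVec_eq_zero_or_one (Q := Q) (T := T) (z := z) K
    with h' | h' <;> rw [h, h'] <;> norm_num [h, h'] at hK

end Integral

/-- The integral points of `P(Q)` are exactly the vectors
`f^z` over feasible assignments `z`, and `z ↦ f^z` is injective on feasible
assignments. -/
theorem integral_points_of_ppoly (n : ℕ) (Q : CSPInstance n) (T : NiceTree n)
    (hT : IsNiceTreeDecompCSP Q T) :
    {f | f ∈ Ppoly Q T ∧ ∀ K, f K = 0 ∨ f K = 1}
      = inducedVec Q T '' {z | Feasible Q z} ∧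
    Set.InjOn (inducedVec Q T) {z | Feasible Q z} := by
  obtain ⟨hvalid, hverts, hscopes⟩ := hT
  refine ⟨Set.Subset.antisymm ?_ ?_, inducedVec_injOn hverts⟩
  · rintro f ⟨⟨⟨hrc, -⟩, hzero⟩, h01⟩
    obtain ⟨z, hz⟩ := hrc.exists_agrees h01 hvalid
    have hfeas := feasible_of_relCons hverts
      (fun C hC => hscopes C (List.mem_append_left _ hC)) h01 hrc hz
    exact ⟨z, hfeas, (eq_inducedVec h01 hzero hz).symm⟩
  · rintro _ ⟨z, hz, rfl⟩
    exact ⟨inducedVec_mem_ppoly hz, inducedVec_eq_zero_or_one⟩
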